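/- For the coupled logistic system, the one-step distance satisfies Δ_{n+1} ≤ (1-k)|c_1 - c_2| + 4c_1(1-k)Δ_n for all n ≥ 0. -/

import Mathlib

/-!
The coupling term `c₁ k (1 - 2xₙ²)` cancels the `k`-share of `xₙ₊₁`, so
`xₙ₊₁ - yₙ₊₁ = (1 - k) (c₁ (1 - 2xₙ²) - c₂ (1 - 2yₙ²))`, and the difference of two logistic
maps on `[-1, 1]` splits as `(c₁ - c₂)(1 - 2yₙ²) - 2c₁ (xₙ + yₙ)(xₙ - yₙ)`.
-/

open Set

lemma abs_one_sub_two_mul_sq_le_one {b : ℝ} (hb : b ∈ Icc (-1 : ℝ) 1) :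
    |1 - 2 * b ^ 2| ≤ 1 := by
  have hb2 : b ^ 2 ≤ 1 := sq_le_one_iff_abs_le_one b |>.mpr (abs_le.mpr hb)
  rw [abs_le]
  constructor <;> nlinarith [sq_nonneg b]

lemma abs_sq_sub_sq_le_two_mul {a b : ℝ} (ha : a ∈ Icc (-1 : ℝ) 1) (hb : b ∈ Icc (-1 : ℝ) 1) :
    |a ^ 2 - b ^ 2| ≤ 2 * |a - b| := by
  have hab : |a + b| ≤ 2 := abs_le.mpr ⟨by linarith [ha.1, hb.1], by linarith [ha.2, hb.2]⟩
  calc |a ^ 2 - b ^ 2| = |a + b| * |a - b| := by rw [sq_sub_sq, abs_mul]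
    _ ≤ 2 * |a - b| := by gcongr

lemma abs_logistic_sub_logistic_le {c c' a b : ℝ} (hc : 0 ≤ c)
    (ha : a ∈ Icc (-1 : ℝ) 1) (hb : b ∈ Icc (-1 : ℝ) 1) :
    |c * (1 - 2 * a ^ 2) - c' * (1 - 2 * b ^ 2)| ≤ |c - c'| + 4 * c * |a - b| := by
  calc |c * (1 - 2 * a ^ 2) - c' * (1 - 2 * b ^ 2)|
      = |(c - c') * (1 - 2 * b ^ 2) - 2 * c * (a ^ 2 - b ^ 2)| := by ring_nf
    _ ≤ |c - c'| * |1 - 2 * b ^ 2| + 2 * c * |a ^ 2 - b ^ 2| := by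
        refine (abs_sub _ _).trans_eq ?_
        rw [abs_mul, abs_mul, abs_of_nonneg (by positivity : 0 ≤ 2 * c)]
    _ ≤ |c - c'| * 1 + 2 * c * (2 * |a - b|) := by
        gcongr
        exacts [abs_one_sub_two_mul_sq_le_one hb, abs_sq_sub_sq_le_two_mul ha hb]
    _ = |c - c'| + 4 * c * |a - b| := by ring

theorem stmt1_general (c1 c2 k : ℝ) (hc1 : 0 < c1)
    (hk1 : k < 1)
    (x y : ℕ → ℝ)
    (hxI : ∀ n, x n ∈ Set.Icc (-1:ℝ) 1) (hyI : ∀ n, y n ∈ Set.Icc (-1:ℝ) 1)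
    (hx : ∀ n, x (n + 1) = c1 * (1 - 2 * (x n) ^ 2))
    (hy : ∀ n, y (n + 1) = (1 - k) * c2 * (1 - 2 * (y n) ^ 2) + c1 * k * (1 - 2 * (x n) ^ 2)) :
    ∀ n, |x (n + 1) - y (n + 1)| ≤ (1 - k) * |c1 - c2| + 4 * c1 * (1 - k) * |x n - y n| := by
  intro n
  have hk : 0 ≤ 1 - k := by linarith
  have hstep : x (n + 1) - y (n + 1)
      = (1 - k) * (c1 * (1 - 2 * x n ^ 2) - c2 * (1 - 2 * y n ^ 2)) := by
    rw [hx, hy]; ring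
  calc |x (n + 1) - y (n + 1)|
      = (1 - k) * |c1 * (1 - 2 * x n ^ 2) - c2 * (1 - 2 * y n ^ 2)| := by
        rw [hstep, abs_mul, abs_of_nonneg hk]
    _ ≤ (1 - k) * (|c1 - c2| + 4 * c1 * |x n - y n|) :=
        mul_le_mul_of_nonneg_left (abs_logistic_sub_logistic_le hc1.le (hxI n) (hyI n)) hk
    _ = (1 - k) * |c1 - c2| + 4 * c1 * (1 - k) * |x n - y n| := by ring

theorem stmt1 (c1 c2 k : ℝ) (hc1 : 0 < c1) (hc1' : c1 ≤ 1) (hc2 : 0 < c2) (hc2' : c2 ≤ 1)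
    (hk0 : 0 < k) (hk1 : k < 1)
    (x y : ℕ → ℝ)
    (hxI : ∀ n, x n ∈ Set.Icc (-1:ℝ) 1) (hyI : ∀ n, y n ∈ Set.Icc (-1:ℝ) 1)
    (hx : ∀ n, x (n + 1) = c1 * (1 - 2 * (x n) ^ 2))
    (hy : ∀ n, y (n + 1) = (1 - k) * c2 * (1 - 2 * (y n) ^ 2) + c1 * k * (1 - 2 * (x n) ^ 2)) :
    ∀ n, |x (n + 1) - y (n + 1)| ≤ (1 - k) * |c1 - c2| + 4 * c1 * (1 - k) * |x n - y n| :=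
  stmt1_general c1 c2 k hc1 hk1 x y hxI hyI hx hy
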